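/- The unrevealed weak-measurement map built from the Oreshkov–Brun operators equals a monitoring of strength 1 − sech(x): Σ_{s=±} P_s(x) ρ P_s(x) = sech(x) ρ + (1 − sech(x)) Σ_{s∈{0,1}} Π_s ρ Π_s, for all x ∈ ℝ. -/

import Mathlib

open Matrix Kronecker BigOperators Filter
open scoped ComplexOrder

noncomputable section

variable {dA dB : Type*} [Fintype dA] [DecidableEq dA] [Fintype dB] [DecidableEq dB]

/-- A projective measurement (complete family of mutually orthogonal projectors),
indexed by the space's own index type (WLOG, allowing zero projectors). -/
structure PVM (n : Type*) [Fintype n] [DecidableEq n] where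
  P : n → Matrix n n ℂ
  herm : ∀ b, (P b).IsHermitian
  idem : ∀ b, P b * P b = P b
  orth : ∀ b b', b ≠ b' → P b * P b' = 0
  complete : ∑ b, P b = 1

/-- Unrevealed projective measurement on subsystem B. -/
def PhiB (B : dB → Matrix dB dB ℂ) (ρ : Matrix (dA × dB) (dA × dB) ℂ) :
    Matrix (dA × dB) (dA × dB) ℂ :=
  ∑ b, ((1 : Matrix dA dA ℂ) ⊗ₖ B b) * ρ * ((1 : Matrix dA dA ℂ) ⊗ₖ B b)

/-- Unrevealed projective measurement on subsystem A. -/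
def PhiA (A : dA → Matrix dA dA ℂ) (ρ : Matrix (dA × dB) (dA × dB) ℂ) :
    Matrix (dA × dB) (dA × dB) ℂ :=
  ∑ a, (A a ⊗ₖ (1 : Matrix dB dB ℂ)) * ρ * (A a ⊗ₖ (1 : Matrix dB dB ℂ))

/-- The monitoring map of strength ε on subsystem B. -/
def monitorB (ε : ℝ) (B : dB → Matrix dB dB ℂ) (ρ : Matrix (dA × dB) (dA × dB) ℂ) :
    Matrix (dA × dB) (dA × dB) ℂ :=
  ((1 - ε : ℝ) : ℂ) • ρ + (ε : ℂ) • PhiB B ρ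

/-- The monitoring map of strength ε on subsystem A. -/
def monitorA (ε : ℝ) (A : dA → Matrix dA dA ℂ) (ρ : Matrix (dA × dB) (dA × dB) ℂ) :
    Matrix (dA × dB) (dA × dB) ℂ :=
  ((1 - ε : ℝ) : ℂ) • ρ + (ε : ℂ) • PhiA A ρ

/-- Partial trace over subsystem B (the reduced state of A). -/
def ptraceB (ρ : Matrix (dA × dB) (dA × dB) ℂ) : Matrix dA dA ℂ :=
  Matrix.of fun i j => ∑ k, ρ (i, k) (j, k)

/-- Partial trace over subsystem A (the reduced state of B). -/
def ptraceA (ρ : Matrix (dA × dB) (dA × dB) ℂ) : Matrix dB dB ℂ :=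
  Matrix.of fun i j => ∑ k, ρ (k, i) (k, j)

/-- Von Neumann entropy S(ρ) = -Tr ρ ln ρ, via eigenvalues. -/
def vnEntropy {n : Type*} [Fintype n] [DecidableEq n] (ρ : Matrix n n ℂ) : ℝ :=
  if h : ρ.IsHermitian then -∑ i, (h.eigenvalues i * Real.log (h.eigenvalues i)) else 0

/-- Quantum mutual information I(ρ) = S(ρ_A) + S(ρ_B) - S(ρ). -/
def mutInfo (ρ : Matrix (dA × dB) (dA × dB) ℂ) : ℝ :=
  vnEntropy (ptraceB ρ) + vnEntropy (ptraceA ρ) - vnEntropy ρ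

/-- Density operator predicate. -/
def IsDensity {n : Type*} [Fintype n] [DecidableEq n] (ρ : Matrix n n ℂ) : Prop :=
  ρ.PosSemidef ∧ ρ.trace = 1

/-- Quantum discord (distance-based form of Rulli–Sarandy). -/
def qd (ρ : Matrix (dA × dB) (dA × dB) ℂ) : ℝ :=
  ⨅ B : PVM dB, (mutInfo ρ - mutInfo (PhiB B.P ρ))

/-- Weak quantum discord. -/
def wqd (ε : ℝ) (ρ : Matrix (dA × dB) (dA × dB) ℂ) : ℝ :=
  ⨅ B : PVM dB, (mutInfo ρ - mutInfo (monitorB ε B.P ρ))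


/-- Oreshkov–Brun weak measurement operator P₊(x). -/
def OBplus {n : Type*} [Fintype n] [DecidableEq n] (Q0 Q1 : Matrix n n ℂ) (x : ℝ) :
    Matrix n n ℂ :=
  ((Real.sqrt ((1 - Real.tanh x) / 2) : ℝ) : ℂ) • Q0 +
    ((Real.sqrt ((1 + Real.tanh x) / 2) : ℝ) : ℂ) • Q1

/-- Oreshkov–Brun weak measurement operator P₋(x). -/
def OBminus {n : Type*} [Fintype n] [DecidableEq n] (Q0 Q1 : Matrix n n ℂ) (x : ℝ) :
    Matrix n n ℂ :=
  ((Real.sqrt ((1 + Real.tanh x) / 2) : ℝ) : ℂ) • Q0 +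
    ((Real.sqrt ((1 - Real.tanh x) / 2) : ℝ) : ℂ) • Q1

/-! Completeness splits `ρ` into its block-diagonal part `Q₀ρQ₀ + Q₁ρQ₁` and its off-diagonal
part `Q₀ρQ₁ + Q₁ρQ₀`. The Oreshkov–Brun pair `a Q₀ + b Q₁`, `b Q₀ + a Q₁` keeps the first with
weight `a² + b² = 1` and damps the second to weight `2ab = sech x`. -/

section Sandwich

variable {𝕜 R : Type*} [CommRing 𝕜] [Ring R] [Algebra 𝕜 R]

theorem eq_sandwich_add_sandwich_of_add_eq_one {Q₀ Q₁ : R} (hsum : Q₀ + Q₁ = 1) (ρ : R) :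
    ρ = (Q₀ * ρ * Q₀ + Q₁ * ρ * Q₁) + (Q₀ * ρ * Q₁ + Q₁ * ρ * Q₀) := by
  conv_lhs => rw [← one_mul ρ, ← mul_one (1 * ρ), ← hsum]
  noncomm_ring

theorem smul_add_smul_mul_mul_smul_add_smul (a b : 𝕜) (Q₀ Q₁ ρ : R) :
    (a • Q₀ + b • Q₁) * ρ * (a • Q₀ + b • Q₁) =
      a ^ 2 • (Q₀ * ρ * Q₀) + b ^ 2 • (Q₁ * ρ * Q₁) + (a * b) • (Q₀ * ρ * Q₁ + Q₁ * ρ * Q₀) := by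
  simp only [add_mul, mul_add, smul_mul_assoc, mul_smul_comm]
  module

theorem sandwich_add_swapped_sandwich {Q₀ Q₁ : R} (hsum : Q₀ + Q₁ = 1) {a b : 𝕜}
    (hab : a ^ 2 + b ^ 2 = 1) (ρ : R) :
    (a • Q₀ + b • Q₁) * ρ * (a • Q₀ + b • Q₁) + (b • Q₀ + a • Q₁) * ρ * (b • Q₀ + a • Q₁) =
      (2 * a * b) • ρ + (1 - 2 * a * b) • (Q₀ * ρ * Q₀ + Q₁ * ρ * Q₁) := by
  set D := Q₀ * ρ * Q₀ + Q₁ * ρ * Q₁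
  set O := Q₀ * ρ * Q₁ + Q₁ * ρ * Q₀
  calc _ = (a ^ 2 + b ^ 2) • D + (2 * a * b) • O := by
          rw [smul_add_smul_mul_mul_smul_add_smul, smul_add_smul_mul_mul_smul_add_smul]
          module
    _ = (2 * a * b) • (D + O) + (1 - 2 * a * b) • D := by rw [hab]; module
    _ = _ := by rw [← eq_sandwich_add_sandwich_of_add_eq_one hsum ρ]

end Sandwich

namespace Real

theorem sq_sqrt_one_sub_tanh_add_sq_sqrt_one_add_tanh (x : ℝ) :
    √((1 - tanh x) / 2) ^ 2 + √((1 + tanh x) / 2) ^ 2 = 1 := by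
  rw [sq_sqrt (by linarith [tanh_lt_one x]), sq_sqrt (by linarith [neg_one_lt_tanh x])]
  ring

theorem two_mul_sqrt_one_sub_tanh_mul_sqrt_one_add_tanh (x : ℝ) :
    2 * √((1 - tanh x) / 2) * √((1 + tanh x) / 2) = (cosh x)⁻¹ := by
  have hprod : (1 - tanh x) / 2 * ((1 + tanh x) / 2) = ((cosh x)⁻¹ / 2) ^ 2 := by
    rw [tanh_eq_sinh_div_cosh]
    field_simp
    linear_combination cosh_sq_sub_sinh_sq x
  rw [mul_assoc, ← sqrt_mul (by linarith [tanh_lt_one x]), hprod, sqrt_sq (by positivity)]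
  ring

end Real

theorem OB_map_eq_monitoring_general {n : Type*} [Fintype n] [DecidableEq n]
    (Q0 Q1 : Matrix n n ℂ)
    (hsum : Q0 + Q1 = 1)
    (x : ℝ) (ρ : Matrix n n ℂ) :
    OBplus Q0 Q1 x * ρ * OBplus Q0 Q1 x + OBminus Q0 Q1 x * ρ * OBminus Q0 Q1 x =
      (((Real.cosh x)⁻¹ : ℝ) : ℂ) • ρ +
        ((1 - (Real.cosh x)⁻¹ : ℝ) : ℂ) • (Q0 * ρ * Q0 + Q1 * ρ * Q1) := by
  have hweights : (2 * √((1 - Real.tanh x) / 2) * √((1 + Real.tanh x) / 2) : ℂ) =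
      (((Real.cosh x)⁻¹ : ℝ) : ℂ) := by
    exact_mod_cast Real.two_mul_sqrt_one_sub_tanh_mul_sqrt_one_add_tanh x
  rw [OBplus, OBminus, sandwich_add_swapped_sandwich hsum
    (by exact_mod_cast Real.sq_sqrt_one_sub_tanh_add_sq_sqrt_one_add_tanh x), hweights,
    Complex.ofReal_sub, Complex.ofReal_one]

/-- The unrevealed weak-measurement map built from the Oreshkov–Brun
operators equals a monitoring of strength 1 - sech(x):
Σ_s P_s ρ P_s = sech(x) ρ + (1 - sech(x)) Σ_s Π_s ρ Π_s, for all x ∈ ℝ. -/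
theorem OB_map_eq_monitoring {n : Type*} [Fintype n] [DecidableEq n]
    (Q0 Q1 : Matrix n n ℂ)
    (h0h : Q0.IsHermitian) (h1h : Q1.IsHermitian)
    (h0i : Q0 * Q0 = Q0) (h1i : Q1 * Q1 = Q1)
    (horth : Q0 * Q1 = 0) (hsum : Q0 + Q1 = 1)
    (x : ℝ) (ρ : Matrix n n ℂ) :
    OBplus Q0 Q1 x * ρ * OBplus Q0 Q1 x + OBminus Q0 Q1 x * ρ * OBminus Q0 Q1 x =
      (((Real.cosh x)⁻¹ : ℝ) : ℂ) • ρ +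
        ((1 - (Real.cosh x)⁻¹ : ℝ) : ℂ) • (Q0 * ρ * Q0 + Q1 * ρ * Q1) :=
  OB_map_eq_monitoring_general Q0 Q1 hsum x ρ
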